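/- arXiv:2511.13034 — 2 statements merged into one kernel-verified Lean document; each statement's English description precedes it below -/
import Mathlib

section
/- Let P be an irreducible row-stochastic matrix on a nonempty finite type X with stationary distribution d, let k ≥ 1, and let R : X → EuclideanSpace ℝ (Fin k) be a vector-valued reward. For any probability vector μ : X → ℝ, the Cesàro average of expected rewards converges to the stationary expected reward: (1/t)·Σ_{n=0}^{t−1} Σ_x (μ·Pⁿ)(x)·R(x) → Σ_x d(x)·R(x) as t → ∞, where (μ·Pⁿ)(x) = Σ_z μ(z)·(Pⁿ)(z,x). -/
/-!
The Cesàro averages `Aₜ = t⁻¹ ∑_{n<t} μ Pⁿ` are Birkhoff averages of the linear map `v ↦ v P`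
along the orbit of `μ`. They lie in the compact standard simplex, and `Aₜ P - Aₜ = t⁻¹ (μ Pᵗ - μ)`
tends to zero, so every cluster point of `(Aₜ)` is a stationary distribution. For an irreducible
`P` the stationary distribution is unique, hence `Aₜ → d`; applying the linear map
`v ↦ ∑ₓ v x • R x` gives the statement.
-/

open Filter Finset Matrix Topology Function

section BirkhoffAverage

variable {𝕜 E α : Type*}

theorem Convex.birkhoffAverage_mem [Field 𝕜] [LinearOrder 𝕜] [IsStrictOrderedRing 𝕜]
    [AddCommGroup E] [Module 𝕜 E] {s : Set E} (hs : Convex 𝕜 s) {f : α → α} {g : α → E}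
    {x : α} (hg : ∀ k, g (f^[k] x) ∈ s) {n : ℕ} (hn : n ≠ 0) :
    birkhoffAverage 𝕜 f g n x ∈ s := by
  rw [birkhoffAverage, birkhoffSum, smul_sum]
  exact hs.sum_mem (fun _ _ => by positivity) (by simp [hn]) fun k _ => hg k

theorem map_birkhoffAverage_id [DivisionSemiring 𝕜] [AddCommMonoid E] [Module 𝕜 E] {F : Type*}
    [FunLike F E E] [AddMonoidHomClass F E E] (f : F) (n : ℕ) (x : E) :
    f (birkhoffAverage 𝕜 f id n x) = birkhoffAverage 𝕜 f id n (f x) := by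
  rw [map_birkhoffAverage 𝕜 𝕜 f]
  simp only [birkhoffAverage, birkhoffSum, Function.comp_apply, id, (Commute.self_iterate f _).eq]

theorem isFixedPt_of_mapClusterPt_birkhoffAverage [RCLike 𝕜] [NormedAddCommGroup E]
    [NormedSpace 𝕜 E] {f : E →L[𝕜] E} {x y : E}
    (hx : Bornology.IsBounded (Set.range (f^[·] x)))
    (hy : MapClusterPt y atTop (birkhoffAverage 𝕜 f id · x)) : IsFixedPt f y := by
  have hdrift := tendsto_birkhoffAverage_apply_sub_birkhoffAverage (𝕜 := 𝕜) (g := id) hx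
  simp only [← map_birkhoffAverage_id f] at hdrift
  have hcl := hy.continuousAt_comp (f := fun v => f v - v) (by fun_prop)
  exact sub_eq_zero.1 (eq_of_nhds_neBot (hcl.clusterPt.mono hdrift))

end BirkhoffAverage

namespace Matrix

variable {X : Type*} [Fintype X] [DecidableEq X]

theorem vecMul_pow_eq_self {R : Type*} [Semiring R] {P : Matrix X X R} {v : X → R}
    (hv : v ᵥ* P = v) (n : ℕ) : v ᵥ* P ^ n = v := by
  induction n with
  | zero => simp
  | succ n ih => rw [pow_succ, ← vecMul_vecMul, ih, hv]

theorem iterate_vecMul {R : Type*} [Semiring R] (P : Matrix X X R) (n : ℕ) (v : X → R) :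
    (· ᵥ* P)^[n] v = v ᵥ* P ^ n := by
  induction n with
  | zero => simp
  | succ n ih => rw [iterate_succ_apply', ih, pow_succ, vecMul_vecMul]

theorem vecMul_mem_stdSimplex {R : Type*} [CommSemiring R] [PartialOrder R] [IsOrderedRing R]
    {P : Matrix X X R} (hP : P ∈ rowStochastic R X) {v : X → R} (hv : v ∈ stdSimplex R X) :
    v ᵥ* P ∈ stdSimplex R X := by
  refine ⟨nonneg_vecMul_of_mem_rowStochastic hP hv.1, ?_⟩
  simpa [dotProduct] using
    vecMul_dotProduct_one_eq_one_rowStochastic hP (x := v) (by simpa [dotProduct] using hv.2)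

variable {P : Matrix X X ℝ}

theorem IsIrreducible.eq_zero_of_vecMul_eq_self (hP : P.IsIrreducible) {v : X → ℝ} (hv0 : 0 ≤ v)
    (hv : v ᵥ* P = v) {x : X} (hx : v x = 0) : v = 0 := by
  funext y
  obtain ⟨n, -, hn⟩ := (isIrreducible_iff_exists_pow_pos hP.nonneg).1 hP y x
  have : v y * (P ^ n) y x ≤ 0 :=
    calc v y * (P ^ n) y x ≤ ∑ z, v z * (P ^ n) z x :=
          single_le_sum (fun z _ => mul_nonneg (hv0 z) (pow_apply_nonneg hP.nonneg n z x))
            (mem_univ y)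
      _ = (v ᵥ* P ^ n) x := rfl
      _ = 0 := by rw [vecMul_pow_eq_self hv n, hx]
  exact le_antisymm (nonpos_of_mul_nonpos_left this hn) (hv0 y)

theorem IsIrreducible.pos_of_vecMul_eq_self (hP : P.IsIrreducible) {d : X → ℝ}
    (hd : d ∈ stdSimplex ℝ X) (hdP : d ᵥ* P = d) (x : X) : 0 < d x := by
  refine (hd.1 x).lt_of_ne' fun hx => ?_
  have hsum := hd.2
  rw [hP.eq_zero_of_vecMul_eq_self hd.1 hdP hx] at hsum
  simp at hsum

theorem IsIrreducible.eq_of_vecMul_eq_self (hP : P.IsIrreducible) {d e : X → ℝ}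
    (hd : d ∈ stdSimplex ℝ X) (hdP : d ᵥ* P = d) (he : e ∈ stdSimplex ℝ X) (heP : e ᵥ* P = e) :
    d = e := by
  have he_pos := hP.pos_of_vecMul_eq_self he heP
  have hX : (univ : Finset X).Nonempty := nonempty_of_sum_ne_zero (by rw [he.2]; exact one_ne_zero)
  obtain ⟨x₀, -, hx₀⟩ := exists_min_image univ (fun x => d x / e x) hX
  -- `c = min (d / e)` makes `d - c • e` a nonnegative invariant vector vanishing at `x₀`.
  set c := d x₀ / e x₀
  have hce : ∀ x, c * e x ≤ d x := fun x => (le_div_iff₀ (he_pos x)).1 (hx₀ x (mem_univ x))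
  have hzero : d - c • e = 0 := by
    refine hP.eq_zero_of_vecMul_eq_self (x := x₀) (fun x => sub_nonneg.2 (hce x)) ?_ ?_
    · rw [sub_vecMul, smul_vecMul, hdP, heP]
    · simp [c, div_mul_cancel₀ _ (he_pos x₀).ne']
  have hc : c = 1 := by
    have := congrArg (∑ x, · x) hzero
    simp only [Pi.sub_apply, Pi.smul_apply, smul_eq_mul, sum_sub_distrib, ← mul_sum, hd.2, he.2,
      Pi.zero_apply, sum_const_zero, mul_one] at this
    linarith
  rwa [hc, one_smul, sub_eq_zero] at hzero

theorem tendsto_birkhoffAverage_vecMul (hP : P ∈ rowStochastic ℝ X) (hPirr : P.IsIrreducible)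
    {μ d : X → ℝ} (hμ : μ ∈ stdSimplex ℝ X) (hd : d ∈ stdSimplex ℝ X) (hdP : d ᵥ* P = d) :
    Tendsto (birkhoffAverage ℝ (· ᵥ* P) id · μ) atTop (𝓝 d) := by
  have horbit : ∀ n, (· ᵥ* P)^[n] μ ∈ stdSimplex ℝ X := fun n => by
    rw [iterate_vecMul]
    exact vecMul_mem_stdSimplex (pow_mem hP n) hμ
  refine (isCompact_stdSimplex ℝ X).tendsto_nhds_of_unique_mapClusterPt ?_ fun e he hcl => ?_
  · filter_upwards [eventually_ne_atTop 0] with n hn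
    exact (convex_stdSimplex ℝ X).birkhoffAverage_mem horbit hn
  · have hbdd := (bounded_stdSimplex X).subset (Set.range_subset_iff.2 horbit)
    have heP := isFixedPt_of_mapClusterPt_birkhoffAverage
      (f := LinearMap.toContinuousLinearMap (vecMulLinear P)) hbdd hcl
    exact hPirr.eq_of_vecMul_eq_self he heP hd hdP

end Matrix

theorem stmt_8_general {X : Type*} [Fintype X] [DecidableEq X] (P : Matrix X X ℝ)
    (hPnonneg : ∀ x y, 0 ≤ P x y) (hProw : ∀ x, ∑ y, P x y = 1)
    (hirr : ∀ x y, ∃ n, 1 ≤ n ∧ 0 < (P ^ n) x y)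
    (d : X → ℝ) (hd0 : ∀ x, 0 ≤ d x) (hd1 : ∑ x, d x = 1)
    (hdstat : ∀ y, ∑ x, d x * P x y = d y)
    (k : ℕ) (R : X → EuclideanSpace ℝ (Fin k))
    (μ : X → ℝ) (hμ0 : ∀ x, 0 ≤ μ x) (hμ1 : ∑ x, μ x = 1) :
    Filter.Tendsto
      (fun t : ℕ => (1 / (t : ℝ)) •
        ∑ n ∈ Finset.range t, ∑ x, (∑ z, μ z * (P ^ n) z x) • R x)
      Filter.atTop (nhds (∑ x, d x • R x)) := by
  have hP : P ∈ rowStochastic ℝ X := mem_rowStochastic_iff_sum.2 ⟨hPnonneg, hProw⟩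
  have hPirr : P.IsIrreducible := (isIrreducible_iff_exists_pow_pos hPnonneg).2 hirr
  have hlim := tendsto_birkhoffAverage_vecMul hP hPirr ⟨hμ0, hμ1⟩ ⟨hd0, hd1⟩ (funext hdstat)
  let reward := Fintype.linearCombination ℝ R
  refine ((reward.continuous_of_finiteDimensional.tendsto d).comp hlim).congr fun t => ?_
  change reward (birkhoffAverage ℝ (· ᵥ* P) id t μ) = _
  rw [map_birkhoffAverage ℝ ℝ reward]
  simp only [birkhoffAverage, birkhoffSum, Function.comp_apply, id, iterate_vecMul, one_div]
  rfl

/-- Cesàro average of expected vector rewards converges to the stationary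
expected reward. -/
theorem stmt_8 {X : Type*} [Fintype X] [DecidableEq X] [Nonempty X] (P : Matrix X X ℝ)
    (hPnonneg : ∀ x y, 0 ≤ P x y) (hProw : ∀ x, ∑ y, P x y = 1)
    (hirr : ∀ x y, ∃ n, 1 ≤ n ∧ 0 < (P ^ n) x y)
    (d : X → ℝ) (hd0 : ∀ x, 0 ≤ d x) (hd1 : ∑ x, d x = 1)
    (hdstat : ∀ y, ∑ x, d x * P x y = d y)
    (k : ℕ) (hk : 1 ≤ k) (R : X → EuclideanSpace ℝ (Fin k))
    (μ : X → ℝ) (hμ0 : ∀ x, 0 ≤ μ x) (hμ1 : ∑ x, μ x = 1) :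
    Filter.Tendsto
      (fun t : ℕ => (1 / (t : ℝ)) •
        ∑ n ∈ Finset.range t, ∑ x, (∑ z, μ z * (P ^ n) z x) • R x)
      Filter.atTop (nhds (∑ x, d x • R x)) :=
  stmt_8_general P hPnonneg hProw hirr d hd0 hd1 hdstat k R μ hμ0 hμ1
end

section
/- Let P be an irreducible row-stochastic matrix on a nonempty finite type X, let r : X → ℝ, and let g ∈ ℝ. If V₁ and V₂ both satisfy the Poisson equation Vᵢ(x) + g = r(x) + Σ_y P(x,y)·Vᵢ(y) for all x ∈ X (i = 1,2), then V₁ − V₂ is constant: there exists c ∈ ℝ with V₁(x) = V₂(x) + c for all x. -/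
/-!
The difference `W = V₁ - V₂` is harmonic for `P`, i.e. `P *ᵥ W = W`, hence also `Pⁿ *ᵥ W = W`
for every `n`. At a maximum `x₀` of `W`, the value `W x₀` is a convex combination of values
`≤ W x₀` with weights `(Pⁿ) x₀ y`, so `W y = W x₀` wherever that weight is positive; by
irreducibility every `y` carries positive weight for some `n`.
-/

open Finset

namespace Matrix

variable {R X : Type*} [Fintype X] [DecidableEq X] [Semiring R]

theorem pow_mulVec_eq_self {M : Matrix X X R} {v : X → R} (hv : M *ᵥ v = v) (n : ℕ) :
    (M ^ n) *ᵥ v = v := by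
  induction n with
  | zero => exact one_mulVec v
  | succ n ih => rw [pow_succ', ← mulVec_mulVec, ih, hv]

variable [LinearOrder R] [IsStrictOrderedRing R]

theorem apply_eq_of_mulVec_apply_eq_of_isMax {M : Matrix X X R} (hM : M ∈ rowStochastic R X)
    {v : X → R} {i j : X} (hmax : ∀ k, v k ≤ v i) (hv : (M *ᵥ v) i = v i) (hij : 0 < M i j) :
    v j = v i := by
  by_contra hne
  have hlt : (M *ᵥ v) i < ∑ k, M i k * v i :=
    sum_lt_sum (fun k _ => mul_le_mul_of_nonneg_left (hmax k) (hM.1 i k))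
      ⟨j, mem_univ j, mul_lt_mul_of_pos_left (lt_of_le_of_ne (hmax j) hne) hij⟩
  rw [← sum_mul, sum_row_of_mem_rowStochastic hM, one_mul, hv] at hlt
  exact lt_irrefl _ hlt

theorem exists_eq_const_of_mulVec_eq_self [Nonempty X] {M : Matrix X X R}
    (hM : M ∈ rowStochastic R X) (hirr : ∀ i j, ∃ n, 0 < (M ^ n) i j) {v : X → R}
    (hv : M *ᵥ v = v) : ∃ c, ∀ i, v i = c := by
  obtain ⟨i₀, hmax⟩ := Finite.exists_max v
  refine ⟨v i₀, fun j => ?_⟩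
  obtain ⟨n, hn⟩ := hirr i₀ j
  exact apply_eq_of_mulVec_apply_eq_of_isMax (pow_mem hM n) hmax
    (congrFun (pow_mulVec_eq_self hv n) i₀) hn

end Matrix

open Matrix

/-- two solutions of the Poisson equation for an irreducible row-stochastic
matrix differ by a constant. -/
theorem stmt_12 {X : Type*} [Fintype X] [DecidableEq X] [Nonempty X] (P : Matrix X X ℝ)
    (hPnonneg : ∀ x y, 0 ≤ P x y) (hProw : ∀ x, ∑ y, P x y = 1)
    (hirr : ∀ x y, ∃ n, 1 ≤ n ∧ 0 < (P ^ n) x y)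
    (r : X → ℝ) (g : ℝ) (V₁ V₂ : X → ℝ)
    (hV₁ : ∀ x, V₁ x + g = r x + ∑ y, P x y * V₁ y)
    (hV₂ : ∀ x, V₂ x + g = r x + ∑ y, P x y * V₂ y) :
    ∃ c : ℝ, ∀ x, V₁ x = V₂ x + c := by
  have hP : P ∈ rowStochastic ℝ X := mem_rowStochastic_iff_sum.2 ⟨hPnonneg, hProw⟩
  have hW : P *ᵥ (V₁ - V₂) = V₁ - V₂ := by
    ext x
    rw [mulVec_sub]
    simp only [Pi.sub_apply, mulVec, dotProduct]
    linarith [hV₁ x, hV₂ x]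
  obtain ⟨c, hc⟩ := exists_eq_const_of_mulVec_eq_self hP
    (fun x y => (hirr x y).imp fun _ => And.right) hW
  exact ⟨c, fun x => eq_add_of_sub_eq' (hc x)⟩
end
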